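/- arXiv:1406.7289 — 3 statements merged into one kernel-verified Lean document; each statement's English description precedes it below -/
import Mathlib

section
/- If a finite sequence over a set of M symbols has the property that between any two occurrences of the same symbol at positions i < j there is some intermediate symbol (at a position p with i < p < j) not occurring before position i, then the sequence has length at most M^2 + 1. -/
/-- A contracted sequence over `M` symbols has length at most `M² + 1`:
if between any two occurrences of the same symbol at positions `i < j` there
is some intermediate symbol not occurring before position `i`, then the
sequence has length at most `M² + 1`. -/
theorem stmt_12 (M L : ℕ) (w : Fin L → Fin M)
    (h : ∀ i j : Fin L, i < j → w i = w j →
      ∃ p : Fin L, i < p ∧ p < j ∧ ∀ q : Fin L, q < i → w q ≠ w p) :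
    L ≤ M ^ 2 + 1 := by
  rcases Nat.eq_zero_or_pos L with hL | hL
  · omega
  set z : Fin L := ⟨0, hL⟩ with hz
  set S : Fin L → Finset (Fin M) := fun i => (Finset.univ.filter (· < i)).image w with hS
  set g : Fin L → Fin M × ℕ := fun i => (w i, (S i).card) with hg
  have hmono : ∀ i j : Fin L, i ≤ j → S i ⊆ S j := by
    intro i j hij x hx
    simp only [hS, Finset.mem_image, Finset.mem_filter, Finset.mem_univ, true_and] at hx ⊢
    obtain ⟨q, hq, rfl⟩ := hx
    exact ⟨q, lt_of_lt_of_le hq hij, rfl⟩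
  have key : ∀ i j : Fin L, i < j → g i ≠ g j := by
    intro i j hij heq
    simp only [hg, Prod.mk.injEq] at heq
    obtain ⟨hw, hc⟩ := heq
    have hSeq : S i = S j :=
      Finset.eq_of_subset_of_card_le (hmono i j hij.le) (le_of_eq hc.symm)
    obtain ⟨p, hip, hpj, hp⟩ := h i j hij hw
    have hmem : w p ∈ S j := by
      simp only [hS, Finset.mem_image, Finset.mem_filter, Finset.mem_univ, true_and]
      exact ⟨p, hpj, rfl⟩
    rw [← hSeq] at hmem
    simp only [hS, Finset.mem_image, Finset.mem_filter, Finset.mem_univ, true_and] at hmem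
    obtain ⟨q, hq, hqe⟩ := hmem
    exact hp q hq hqe
  have hinj : Function.Injective g := by
    intro i j heq
    rcases lt_trichotomy i j with h' | h' | h'
    · exact absurd heq (key i j h')
    · exact h'
    · exact absurd heq.symm (key j i h')
  have hsub : Finset.univ.image g ⊆ insert (g z) ((Finset.univ : Finset (Fin M)) ×ˢ Finset.Icc 1 M) := by
    intro x hx
    simp only [Finset.mem_image, Finset.mem_univ, true_and] at hx
    obtain ⟨i, rfl⟩ := hx
    rcases eq_or_ne i z with rfl | hne
    · exact Finset.mem_insert_self _ _
    · have hzi : z < i := by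
        rw [Fin.lt_def]
        exact Nat.pos_of_ne_zero fun h0 => hne (Fin.ext h0)
      refine Finset.mem_insert_of_mem ?_
      simp only [Finset.mem_product, Finset.mem_univ, Finset.mem_Icc, true_and]
      constructor
      · have : w z ∈ S i := by
          simp only [hS, Finset.mem_image, Finset.mem_filter, Finset.mem_univ, true_and]
          exact ⟨z, hzi, rfl⟩
        exact Finset.card_pos.mpr ⟨w z, this⟩
      · calc (S i).card ≤ Fintype.card (Fin M) := Finset.card_le_univ _
          _ = M := Fintype.card_fin M
  have hcard : L ≤ (insert (g z) ((Finset.univ : Finset (Fin M)) ×ˢ Finset.Icc 1 M)).card := by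
    calc L = (Finset.univ.image g).card := by
          rw [Finset.card_image_of_injective _ hinj, Finset.card_univ, Fintype.card_fin]
      _ ≤ _ := Finset.card_le_card hsub
  have : (insert (g z) ((Finset.univ : Finset (Fin M)) ×ˢ Finset.Icc 1 M)).card ≤ M * M + 1 := by
    calc (insert (g z) ((Finset.univ : Finset (Fin M)) ×ˢ Finset.Icc 1 M)).card
        ≤ ((Finset.univ : Finset (Fin M)) ×ˢ Finset.Icc 1 M).card + 1 := Finset.card_insert_le _ _
      _ = M * M + 1 := by
          rw [Finset.card_product, Finset.card_univ, Fintype.card_fin, Nat.card_Icc, Nat.add_sub_cancel]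
  have := hcard.trans this
  nlinarith
end

section
/- Region equivalence on ℝ² defined by matching integer parts (capped at cmax) and the ordering of fractional parts is an equivalence relation with finitely many classes, and it is compatible with resets: if ν₁ and ν₂ are equivalent and the same subset of coordinates is reset to 0 in both, the resulting valuations are equivalent. -/
/-! Region equivalence is the kernel of a map into a finite type: each coordinate is summarised by
`none` if it exceeds `cmax` and otherwise by its integer part and whether its fractional part
vanishes, and the pair of fractional parts by their relative order when both are relevant.
A reset coordinate is `0` in both valuations, which matches itself and switches off the
fractional-order clause. -/

/-- Nonnegative valuations on two variables. -/
def Val : Type := {v : ℝ × ℝ // 0 ≤ v.1 ∧ 0 ≤ v.2}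

/-- Two coordinate values match: either both exceed `cmax`, or they have the
same integer part and their fractional parts are simultaneously zero. -/
def coordEq (cmax : ℕ) (a b : ℝ) : Prop :=
  ((cmax : ℝ) < a ∧ (cmax : ℝ) < b) ∨
    (⌊a⌋ = ⌊b⌋ ∧ (Int.fract a = 0 ↔ Int.fract b = 0))

/-- Region equivalence on `ℝ≥0²`: matching capped integer parts, zero-ness of
fractional parts, and the ordering of fractional parts (for coordinates with
non-integer values at most `cmax`). -/
def regEquiv (cmax : ℕ) (v w : Val) : Prop :=
  coordEq cmax v.1.1 w.1.1 ∧ coordEq cmax v.1.2 w.1.2 ∧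
  ((v.1.1 ≤ (cmax : ℝ) ∧ v.1.2 ≤ (cmax : ℝ) ∧
      Int.fract v.1.1 ≠ 0 ∧ Int.fract v.1.2 ≠ 0) →
    ((Int.fract v.1.1 ≤ Int.fract v.1.2 ↔ Int.fract w.1.1 ≤ Int.fract w.1.2) ∧
     (Int.fract v.1.2 ≤ Int.fract v.1.1 ↔ Int.fract w.1.2 ≤ Int.fract w.1.1)))

/-- Reset the chosen subset of coordinates to `0`. -/
def resetVal (bx bY : Bool) (v : Val) : Val :=
  ⟨(if bx then 0 else v.1.1, if bY then 0 else v.1.2), by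
    constructor
    · dsimp only; split
      · exact le_refl 0
      · exact v.2.1
    · dsimp only; split
      · exact le_refl 0
      · exact v.2.2⟩

section KernelOfMap

variable {α β : Type*} {r : α → α → Prop} (f : α → β)

theorem equivalence_of_forall_iff_eq (h : ∀ a b, r a b ↔ f a = f b) : Equivalence r where
  refl a := (h a a).2 rfl
  symm hab := (h _ _).2 ((h _ _).1 hab).symm
  trans hab hbc := (h _ _).2 (((h _ _).1 hab).trans ((h _ _).1 hbc))

theorem finite_quot_of_forall_iff_eq [Finite β] (h : ∀ a b, r a b ↔ f a = f b) :
    Finite (Quot r) :=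
  Finite.of_injective (Quot.lift f fun a b hab => (h a b).1 hab) <| by
    rintro ⟨a⟩ ⟨b⟩ hab
    exact Quot.sound ((h a b).2 hab)

end KernelOfMap

theorem coordEq_refl (cmax : ℕ) (a : ℝ) : coordEq cmax a a :=
  Or.inr ⟨rfl, Iff.rfl⟩

theorem coordEq_symm {cmax : ℕ} {a b : ℝ} (h : coordEq cmax a b) : coordEq cmax b a :=
  h.imp And.symm fun h => ⟨h.1.symm, h.2.symm⟩

/-- A value just above `cmax` has integer part `cmax` and nonzero fractional part, so it cannot
match a value at most `cmax` with the same integer part. -/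
theorem coordEq.lt_of_lt {cmax : ℕ} {a b : ℝ} (h : coordEq cmax a b) (ha : (cmax : ℝ) < a) :
    (cmax : ℝ) < b := by
  rcases h with ⟨-, hb⟩ | ⟨hfloor, hfract⟩
  · exact hb
  by_contra! hb
  have hb' : ⌊b⌋ ≤ cmax := Int.floor_le_floor hb |>.trans_eq (Int.floor_natCast cmax)
  have ha' : (cmax : ℤ) ≤ ⌊a⌋ := Int.le_floor.2 (mod_cast ha.le)
  have hcmax : ⌊b⌋ = cmax := by omega
  have hfract_b : Int.fract b = 0 := by
    have := Int.fract_nonneg b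
    rw [Int.fract, hcmax] at this ⊢
    push_cast at this ⊢
    linarith
  have hfract_a := hfract.2 hfract_b
  rw [Int.fract, hfloor, hcmax] at hfract_a
  push_cast at hfract_a
  linarith

theorem coordEq.le_iff {cmax : ℕ} {a b : ℝ} (h : coordEq cmax a b) :
    a ≤ cmax ↔ b ≤ cmax := by
  simp only [← not_lt]
  exact not_congr ⟨h.lt_of_lt, (coordEq_symm h).lt_of_lt⟩

theorem coordEq.fract_eq_zero_iff {cmax : ℕ} {a b : ℝ} (h : coordEq cmax a b) (ha : a ≤ cmax) :
    Int.fract a = 0 ↔ Int.fract b = 0 :=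
  (h.resolve_left fun h' => h'.1.not_ge ha).2

theorem coordEq.active_iff {cmax : ℕ} {a b : ℝ} (h : coordEq cmax a b) :
    (a ≤ cmax ∧ Int.fract a ≠ 0) ↔ (b ≤ cmax ∧ Int.fract b ≠ 0) := by
  rw [← h.le_iff]
  exact and_congr_right fun ha => not_congr (h.fract_eq_zero_iff ha)

open Classical in
noncomputable def coordSig (cmax : ℕ) (a : ℝ) : Option (Fin (cmax + 1) × Prop) :=
  if h : (cmax : ℝ) < a then none
  else some (⟨⌊a⌋.toNat, by
    have : ⌊a⌋ ≤ cmax := Int.floor_le_floor (not_lt.1 h) |>.trans_eq (Int.floor_natCast cmax)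
    omega⟩, Int.fract a = 0)

theorem coordEq_iff_coordSig_eq {cmax : ℕ} {a b : ℝ} (ha : 0 ≤ a) (hb : 0 ≤ b) :
    coordEq cmax a b ↔ coordSig cmax a = coordSig cmax b := by
  by_cases ha' : (cmax : ℝ) < a <;> by_cases hb' : (cmax : ℝ) < b
  · simp [coordEq, coordSig, ha', hb']
  · simp only [coordSig, ha', hb', dite_true, dite_false, reduceCtorEq, iff_false]
    exact fun h => hb' (h.lt_of_lt ha')
  · simp only [coordSig, ha', hb', dite_true, dite_false, reduceCtorEq, iff_false]
    exact fun h => ha' ((coordEq_symm h).lt_of_lt hb')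
  · have := Int.floor_nonneg.2 ha
    have := Int.floor_nonneg.2 hb
    simp only [coordEq, coordSig, ha', hb', false_and, false_or, dite_false, Option.some.injEq,
      Prod.mk.injEq, Fin.mk.injEq, eq_iff_iff]
    exact and_congr_left' (by omega)

open Classical in
noncomputable def valSig (cmax : ℕ) (v : Val) :
    Option (Fin (cmax + 1) × Prop) × Option (Fin (cmax + 1) × Prop) × Option (Prop × Prop) :=
  (coordSig cmax v.1.1, coordSig cmax v.1.2,
    if v.1.1 ≤ cmax ∧ v.1.2 ≤ cmax ∧ Int.fract v.1.1 ≠ 0 ∧ Int.fract v.1.2 ≠ 0 then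
      some (Int.fract v.1.1 ≤ Int.fract v.1.2, Int.fract v.1.2 ≤ Int.fract v.1.1)
    else none)

theorem regEquiv_iff_valSig_eq (cmax : ℕ) (v w : Val) :
    regEquiv cmax v w ↔ valSig cmax v = valSig cmax w := by
  rw [regEquiv, valSig, valSig, Prod.mk.injEq, Prod.mk.injEq,
    ← coordEq_iff_coordSig_eq v.2.1 w.2.1, ← coordEq_iff_coordSig_eq v.2.2 w.2.2]
  refine and_congr_right fun h₁ => and_congr_right fun h₂ => ?_
  have hactive : (v.1.1 ≤ cmax ∧ v.1.2 ≤ cmax ∧ Int.fract v.1.1 ≠ 0 ∧ Int.fract v.1.2 ≠ 0) ↔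
      (w.1.1 ≤ cmax ∧ w.1.2 ≤ cmax ∧ Int.fract w.1.1 ≠ 0 ∧ Int.fract w.1.2 ≠ 0) := by
    have := h₁.active_iff
    have := h₂.active_iff
    tauto
  by_cases hv : v.1.1 ≤ cmax ∧ v.1.2 ≤ cmax ∧ Int.fract v.1.1 ≠ 0 ∧ Int.fract v.1.2 ≠ 0
  · rw [if_pos hv, if_pos (hactive.1 hv), Option.some.injEq, Prod.mk.injEq, eq_iff_iff,
      eq_iff_iff]
    exact ⟨fun h => h hv, fun h _ => h⟩
  · rw [if_neg hv, if_neg (mt hactive.2 hv)]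
    exact iff_of_true (fun h => absurd h hv) rfl

theorem regEquiv_resetVal {cmax : ℕ} {v w : Val} (h : regEquiv cmax v w) (bx bY : Bool) :
    regEquiv cmax (resetVal bx bY v) (resetVal bx bY w) := by
  obtain ⟨h₁, h₂, h₃⟩ := h
  cases bx <;> cases bY <;> simp only [resetVal, regEquiv, Bool.false_eq_true, if_true, if_false]
  · exact ⟨h₁, h₂, h₃⟩
  · exact ⟨h₁, coordEq_refl cmax 0, fun hv => absurd Int.fract_zero hv.2.2.2⟩
  · exact ⟨coordEq_refl cmax 0, h₂, fun hv => absurd Int.fract_zero hv.2.2.1⟩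
  · exact ⟨coordEq_refl cmax 0, coordEq_refl cmax 0, fun hv => absurd Int.fract_zero hv.2.2.1⟩

/-- Region equivalence is an equivalence relation with finitely many classes,
and it is compatible with resets. -/
theorem stmt_15 (cmax : ℕ) :
    Equivalence (regEquiv cmax) ∧
    Finite (Quot (regEquiv cmax)) ∧
    (∀ v w : Val, regEquiv cmax v w → ∀ bx bY : Bool,
      regEquiv cmax (resetVal bx bY v) (resetVal bx bY w)) :=
  ⟨equivalence_of_forall_iff_eq _ (regEquiv_iff_valSig_eq cmax),
    finite_quot_of_forall_iff_eq _ (regEquiv_iff_valSig_eq cmax),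
    fun _ _ h => regEquiv_resetVal h⟩
end

section
/- Region equivalence is compatible with rectangular guards: if ν₁ ~ ν₂ are region-equivalent valuations in ℝ≥0² and φ is a conjunction of constraints of the form z ⋈ k with k ≤ cmax a natural number and ⋈ ∈ {<, ≤, =, ≥, >}, then ν₁ satisfies φ if and only if ν₂ satisfies φ. -/
/-- Comparison operators appearing in rectangular constraints. -/
inductive GRel | lt | le | eq | ge | gt

/-- Satisfaction of an atomic constraint `z ⋈ k`. -/
def GRel.holds : GRel → ℝ → ℝ → Prop
  | .lt, a, k => a < k
  | .le, a, k => a ≤ k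
  | .eq, a, k => a = k
  | .ge, a, k => k ≤ a
  | .gt, a, k => k < a

/-- A rectangular guard is a conjunction (list) of atomic constraints; each
atom names a coordinate (`true` = first), a relation, and a constant. -/
def satisfies (v : Val) (φ : List (Bool × GRel × ℕ)) : Prop :=
  ∀ c ∈ φ, c.2.1.holds (if c.1 then v.1.1 else v.1.2) (c.2.2 : ℝ)

theorem Int.eq_cast_iff_floor_eq_and_fract_eq_zero {R : Type*} [Ring R] [LinearOrder R]
    [IsStrictOrderedRing R] [FloorRing R] (a : R) (k : ℤ) :
    a = k ↔ ⌊a⌋ = k ∧ Int.fract a = 0 := by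
  constructor
  · rintro rfl
    simp
  · rintro ⟨hfloor, hfract⟩
    rw [← Int.fract_add_floor a, hfract, hfloor, zero_add]

namespace GRel

theorem holds_iff_of_lt {a b k : ℝ} (ha : k < a) (hb : k < b) (r : GRel) :
    r.holds a k ↔ r.holds b k := by
  cases r <;> simp only [holds] <;> constructor <;> intro <;> linarith

theorem holds_iff_of_floor_eq {a b : ℝ} (hfloor : ⌊a⌋ = ⌊b⌋)
    (hfract : Int.fract a = 0 ↔ Int.fract b = 0) (r : GRel) (k : ℤ) :
    r.holds a k ↔ r.holds b k := by
  have hlt : a < k ↔ b < k := by rw [← Int.floor_lt, ← Int.floor_lt, hfloor]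
  have heq : a = k ↔ b = k := by
    rw [Int.eq_cast_iff_floor_eq_and_fract_eq_zero, Int.eq_cast_iff_floor_eq_and_fract_eq_zero,
      hfloor, hfract]
  have hle : a ≤ k ↔ b ≤ k := by rw [le_iff_lt_or_eq, le_iff_lt_or_eq, hlt, heq]
  cases r
  · exact hlt
  · exact hle
  · exact heq
  · simpa only [holds, not_lt] using hlt.not
  · simpa only [holds, not_le] using hle.not

theorem holds_iff_of_coordEq {cmax : ℕ} {a b : ℝ} (h : coordEq cmax a b) (r : GRel) {k : ℕ}
    (hk : k ≤ cmax) : r.holds a k ↔ r.holds b k := by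
  rcases h with ⟨ha, hb⟩ | ⟨hfloor, hfract⟩
  · have hk' : (k : ℝ) ≤ cmax := by exact_mod_cast hk
    exact holds_iff_of_lt (hk'.trans_lt ha) (hk'.trans_lt hb) r
  · exact_mod_cast holds_iff_of_floor_eq hfloor hfract r k

end GRel

/-- Region equivalence is compatible with rectangular guards whose constants
are at most `cmax`. -/
theorem stmt_16 (cmax : ℕ) (v w : Val) (h : regEquiv cmax v w)
    (φ : List (Bool × GRel × ℕ)) (hφ : ∀ c ∈ φ, c.2.2 ≤ cmax) :
    satisfies v φ ↔ satisfies w φ := by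
  unfold satisfies
  refine forall₂_congr fun c hc => ?_
  obtain ⟨_ | _, r, k⟩ := c
  · exact r.holds_iff_of_coordEq h.2.1 (hφ _ hc)
  · exact r.holds_iff_of_coordEq h.1 (hφ _ hc)
end
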